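/- If Bμ ≤ Bλ in P_{n,r}, then a(Bλ) ≤ a(Bμ), where a is the a-function on r-partitions. -/
import Mathlib


open Finset

/-- An `r`-tuple of partitions of total size `n` (the set `P_{n,r}`). -/
structure PTuple (n r : ℕ) where
  f : Fin r → ℕ → ℕ
  antitone : ∀ a, Antitone (f a)
  supp : ∀ a i, n ≤ i → f a i = 0
  sum_eq : ∑ a : Fin r, ∑ i ∈ range n, f a i = n

/-- The interleaved composition `c(Bλ)`: the entry at position `j = q·r + a` is `λ^{(a)}_q`. -/
def interleave {n r : ℕ} (hr : 0 < r) (lam : PTuple n r) (j : ℕ) : ℕ :=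
  lam.f ⟨j % r, Nat.mod_lt _ hr⟩ (j / r)

/-- Dominance order on `P_{n,r}`: `Bμ ≤ Bλ` iff `c(Bμ) ≤ c(Bλ)` (partial sums). -/
def DomT {n r : ℕ} (hr : 0 < r) (μ lam : PTuple n r) : Prop :=
  ∀ j, ∑ i ∈ range j, interleave hr μ i ≤ ∑ i ∈ range j, interleave hr lam i

/-- `|λ^{(a)}|`. -/
def psize {n r : ℕ} (lam : PTuple n r) (a : Fin r) : ℕ := ∑ i ∈ range n, lam.f a i

/-- `n(Bλ) = ∑_a n(λ^{(a)})`, `n(λ) = ∑_j (j-1)λ_j` (0-indexed `∑ j·λ_j`). -/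
def nfun {n r : ℕ} (lam : PTuple n r) : ℕ :=
  ∑ a : Fin r, ∑ i ∈ range n, i * lam.f a i

/-- `a(Bλ) = r·n(Bλ) + ∑_{i=1}^r (i-1)|λ^{(i)}|`. -/
def afun {n r : ℕ} (lam : PTuple n r) : ℕ :=
  r * nfun lam + ∑ a : Fin r, (a : ℕ) * psize lam a

lemma sum_range_mul_eq (g : ℕ → ℕ) (m r : ℕ) :
    ∑ j ∈ range (m * r), g j = ∑ q ∈ range m, ∑ a ∈ range r, g (q * r + a) := by
  induction m with
  | zero => simp
  | succ m ih =>
    rw [Finset.sum_range_succ, ← ih, Nat.succ_mul]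
    rw [Finset.range_eq_Ico,
      ← Finset.sum_Ico_consecutive g (Nat.zero_le (m*r)) (Nat.le_add_right (m*r) r),
      Finset.sum_Ico_eq_sum_range]
    simp [Finset.sum_Ico_eq_sum_range]

lemma abel_id (c : ℕ → ℕ) (N : ℕ) :
    ∑ j ∈ range N, j * c j + ∑ k ∈ range N, ∑ i ∈ range (k+1), c i
      = N * ∑ i ∈ range N, c i := by
  induction N with
  | zero => simp
  | succ N ih =>
    rw [Finset.sum_range_succ, Finset.sum_range_succ (fun k => ∑ i ∈ range (k+1), c i),
      Finset.sum_range_succ c]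
    have : (N+1) * (∑ i ∈ range N, c i + c N)
        = N * ∑ i ∈ range N, c i + N * c N + (∑ i ∈ range N, c i + c N) := by ring
    rw [this, ← ih]
    ring

lemma itl_apply {n r : ℕ} (hr : 0 < r) (lam : PTuple n r) (q a : ℕ) (ha : a < r) :
    interleave hr lam (q * r + a) = lam.f ⟨a, ha⟩ q := by
  have h1 : (q * r + a) % r = a := by
    rw [Nat.add_comm, Nat.add_mul_mod_self_right, Nat.mod_eq_of_lt ha]
  have h2 : (q * r + a) / r = q := by
    rw [Nat.add_comm, Nat.add_mul_div_right _ _ hr, Nat.div_eq_of_lt ha, Nat.zero_add]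
  simp only [interleave, h2]
  congr 1
  exact Fin.ext h1

lemma sum_itl {n r : ℕ} (hr : 0 < r) (lam : PTuple n r) :
    ∑ j ∈ range (n * r), interleave hr lam j = n := by
  rw [sum_range_mul_eq]
  have : ∀ q ∈ range n, ∑ a ∈ range r, interleave hr lam (q * r + a)
      = ∑ a : Fin r, lam.f a q := by
    intro q _
    rw [← Fin.sum_univ_eq_sum_range (fun a => interleave hr lam (q * r + a))]
    exact Finset.sum_congr rfl (fun a _ => by rw [itl_apply hr lam q a a.isLt])
  rw [Finset.sum_congr rfl this, Finset.sum_comm, lam.sum_eq]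

lemma afun_eq {n r : ℕ} (hr : 0 < r) (lam : PTuple n r) :
    afun lam = ∑ j ∈ range (n * r), j * interleave hr lam j := by
  rw [sum_range_mul_eq]
  have key : ∀ q ∈ range n, ∑ a ∈ range r, (q * r + a) * interleave hr lam (q * r + a)
      = ∑ a : Fin r, (q * r + (a : ℕ)) * lam.f a q := by
    intro q _
    rw [← Fin.sum_univ_eq_sum_range (fun a => (q * r + a) * interleave hr lam (q * r + a))]
    exact Finset.sum_congr rfl (fun a _ => by rw [itl_apply hr lam q a a.isLt])
  rw [Finset.sum_congr rfl key, Finset.sum_comm]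
  unfold afun nfun psize
  rw [Finset.mul_sum, ← Finset.sum_add_distrib]
  refine Finset.sum_congr rfl (fun a _ => ?_)
  rw [Finset.mul_sum, Finset.mul_sum, ← Finset.sum_add_distrib]
  exact Finset.sum_congr rfl (fun q _ => by ring)

/-- if `Bμ ≤ Bλ` in `P_{n,r}`, then `a(Bλ) ≤ a(Bμ)`. -/
theorem afun_antitone_of_dominance (n r : ℕ) (hr : 0 < r) (μ lam : PTuple n r)
    (h : DomT hr μ lam) : afun lam ≤ afun μ := by
  set N := n * r with hN
  have hTle : ∑ k ∈ range N, ∑ i ∈ range (k+1), interleave hr μ i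
      ≤ ∑ k ∈ range N, ∑ i ∈ range (k+1), interleave hr lam i :=
    Finset.sum_le_sum (fun k _ => h (k+1))
  have e1 := abel_id (interleave hr lam) N
  have e2 := abel_id (interleave hr μ) N
  rw [sum_itl hr lam] at e1
  rw [sum_itl hr μ] at e2
  rw [afun_eq hr lam, afun_eq hr μ, ← hN]
  omega
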